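/- (Summability of OOMD increments.) Suppose ψ is differentiable and 1-strongly convex with respect to the 2-norm on Z and η ≤ 1/(8P), and let z* ∈ Z* be any Nash equilibrium. Then for every T ≥ 2 the OOMD iterates satisfy Σ_{t=1}^{T−1} (‖ẑ_{t+1} − z_t‖₂² + ‖z_t − ẑ_t‖₂²) ≤ (32/15) D_ψ(z*, ẑ₁); consequently ‖z_t − ẑ_t‖₂ → 0, ‖z_{t+1} − z_t‖₂ → 0, and ‖ẑ_{t+1} − ẑ_t‖₂ → 0 as t → ∞. -/

import Mathlib

open Finset Filter Topology

noncomputable section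

/-- Squared Euclidean norm on `ℝ^n`. -/
def sqnorm {n : ℕ} (z : Fin n → ℝ) : ℝ := ∑ i, (z i) ^ 2

/-- Euclidean (2-)norm on `ℝ^n`. -/
def norm2 {n : ℕ} (z : Fin n → ℝ) : ℝ := Real.sqrt (sqnorm z)

/-- 1-norm on `ℝ^n`. -/
def norm1 {n : ℕ} (z : Fin n → ℝ) : ℝ := ∑ i, |z i|

/-- Dot product on `ℝ^n`. -/
def dotp {n : ℕ} (a b : Fin n → ℝ) : ℝ := ∑ i, a i * b i

/-- Treeplexes (Hoda et al.): probability simplexes, Cartesian products, and branching. -/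
inductive IsTreeplex : {n : ℕ} → Set (Fin n → ℝ) → Prop
  | simplex (m : ℕ) :
      IsTreeplex {x : Fin (m + 1) → ℝ | (∀ i, 0 ≤ x i) ∧ (∑ i, x i) = 1}
  | prod {m k : ℕ} {S : Set (Fin m → ℝ)} {T : Set (Fin k → ℝ)} :
      IsTreeplex S → IsTreeplex T →
      IsTreeplex {z : Fin (m + k) → ℝ | ∃ u ∈ S, ∃ v ∈ T, z = Fin.append u v}
  | branch {m k : ℕ} {S : Set (Fin m → ℝ)} {T : Set (Fin k → ℝ)} (i : Fin m) :
      IsTreeplex S → IsTreeplex T →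
      IsTreeplex {z : Fin (m + k) → ℝ | ∃ u ∈ S, ∃ v ∈ T,
        z = Fin.append u (fun j => u i * v j)}

/-- A point `z = (x, y)` of the product space `ℝ^M × ℝ^N`. -/
abbrev Pt (M N : ℕ) := (Fin M → ℝ) × (Fin N → ℝ)

def dotPt {M N : ℕ} (a b : Pt M N) : ℝ := dotp a.1 b.1 + dotp a.2 b.2

def sqnormPt {M N : ℕ} (z : Pt M N) : ℝ := sqnorm z.1 + sqnorm z.2

def norm2Pt {M N : ℕ} (z : Pt M N) : ℝ := Real.sqrt (sqnormPt z)

def norm1Pt {M N : ℕ} (z : Pt M N) : ℝ := norm1 z.1 + norm1 z.2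

/-- The game operator `F(z) = (G y, -Gᵀ x)`. -/
def Fop {M N : ℕ} (G : Matrix (Fin M) (Fin N) ℝ) (z : Pt M N) : Pt M N :=
  (G.mulVec z.2, -(G.transpose.mulVec z.1))

/-- Bregman divergence of `ψ` (via the Fréchet derivative). -/
def Dbreg {M N : ℕ} (ψ : Pt M N → ℝ) (u v : Pt M N) : ℝ :=
  ψ u - ψ v - fderiv ℝ ψ v (u - v)

/-- Bregman divergence on a single space. -/
def Dbreg1 {n : ℕ} (ψ : (Fin n → ℝ) → ℝ) (u v : Fin n → ℝ) : ℝ :=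
  ψ u - ψ v - fderiv ℝ ψ v (u - v)

/-- Optimistic online mirror descent with Bregman-divergence function `D`,
step size `η`, iterates `z` and `zh` (the latter is `ẑ`), started from an
arbitrary `ẑ₁ = z₀ ∈ Z`. -/
def IsOOMD {M N : ℕ} (G : Matrix (Fin M) (Fin N) ℝ) (Z : Set (Pt M N))
    (D : Pt M N → Pt M N → ℝ) (η : ℝ) (z zh : ℕ → Pt M N) : Prop :=
  z 0 ∈ Z ∧ zh 1 = z 0 ∧
  (∀ t : ℕ, 1 ≤ t → z t ∈ Z ∧
    ∀ w ∈ Z, η * dotPt (z t) (Fop G (z (t - 1))) + D (z t) (zh t) ≤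
      η * dotPt w (Fop G (z (t - 1))) + D w (zh t)) ∧
  (∀ t : ℕ, 1 ≤ t → zh (t + 1) ∈ Z ∧
    ∀ w ∈ Z, η * dotPt (zh (t + 1)) (Fop G (z t)) + D (zh (t + 1)) (zh t) ≤
      η * dotPt w (Fop G (z t)) + D w (zh t))

def maxPayoff {M N : ℕ} (G : Matrix (Fin M) (Fin N) ℝ) (Y : Set (Fin N → ℝ))
    (x : Fin M → ℝ) : ℝ :=
  sSup ((fun y => dotp x (G.mulVec y)) '' Y)

def minPayoff {M N : ℕ} (G : Matrix (Fin M) (Fin N) ℝ) (X : Set (Fin M → ℝ))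
    (y : Fin N → ℝ) : ℝ :=
  sInf ((fun x => dotp x (G.mulVec y)) '' X)

/-- `X* = argmin_{x ∈ X} max_{y ∈ Y} xᵀGy`. -/
def Xstar {M N : ℕ} (G : Matrix (Fin M) (Fin N) ℝ) (X : Set (Fin M → ℝ))
    (Y : Set (Fin N → ℝ)) : Set (Fin M → ℝ) :=
  {x ∈ X | ∀ x' ∈ X, maxPayoff G Y x ≤ maxPayoff G Y x'}

/-- `Y* = argmax_{y ∈ Y} min_{x ∈ X} xᵀGy`. -/
def Ystar {M N : ℕ} (G : Matrix (Fin M) (Fin N) ℝ) (X : Set (Fin M → ℝ))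
    (Y : Set (Fin N → ℝ)) : Set (Fin N → ℝ) :=
  {y ∈ Y | ∀ y' ∈ Y, minPayoff G X y' ≤ minPayoff G X y}

/-- The set of Nash equilibria `Z* = X* × Y*`. -/
def NashSet {M N : ℕ} (G : Matrix (Fin M) (Fin N) ℝ) (X : Set (Fin M → ℝ))
    (Y : Set (Fin N → ℝ)) : Set (Pt M N) :=
  (Xstar G X Y) ×ˢ (Ystar G X Y)

/-- Generalized KL divergence (Bregman divergence of the vanilla entropy),
with the convention `0 ln 0 = 0`. -/
def KLgen {n : ℕ} (u v : Fin n → ℝ) : ℝ :=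
  ∑ i, (u i * Real.log (u i / v i) - u i + v i)

def KLgenPt {M N : ℕ} (u v : Pt M N) : ℝ := KLgen u.1 v.1 + KLgen u.2 v.2

/-- The combinatorial structure of a treeplex in sequence form: indices `Fin n`,
information sets `Fin K`, the information set `owner i = h(i)` of each index,
and the parent index `parent h = σ(h)` of each information set (`none` for the
root convention `z_{σ(h)} = 1`), with an acyclicity witness. -/
structure TreeplexData (n K : ℕ) where
  owner : Fin n → Fin K
  parent : Fin K → Option (Fin n)
  rank : Fin K → ℕ
  parent_rank : ∀ (h : Fin K) (j : Fin n), parent h = some j → rank (owner j) < rank h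

/-- `z_{σ(h)}`, with the convention that it is `1` when `h` has no parent. -/
def TreeplexData.parentVal {n K : ℕ} (T : TreeplexData n K) (z : Fin n → ℝ) (h : Fin K) : ℝ :=
  (T.parent h).elim 1 z

/-- The treeplex determined by `T`: `z ≥ 0` with `∑_{i ∈ Ω_h} z_i = z_{σ(h)}`. -/
def TreeplexData.set {n K : ℕ} (T : TreeplexData n K) : Set (Fin n → ℝ) :=
  {z | (∀ i, 0 ≤ z i) ∧
    ∀ h : Fin K, (∑ i ∈ Finset.univ.filter (fun i => T.owner i = h), z i) = T.parentVal z h}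

/-- `q_i = z_i / z_{p_i}`. -/
def TreeplexData.q {n K : ℕ} (T : TreeplexData n K) (z : Fin n → ℝ) (i : Fin n) : ℝ :=
  z i / T.parentVal z (T.owner i)

/-- The dilated entropy `Ψ^dil_α(z) = ∑_i α_{h(i)} z_i ln q_i`. -/
def dilEnt {n K : ℕ} (T : TreeplexData n K) (α : Fin K → ℝ) (z : Fin n → ℝ) : ℝ :=
  ∑ i, α (T.owner i) * z i * Real.log (T.q z i)

/-- Bregman divergence of the dilated entropy:
`D(u, z) = ∑_i α_{h(i)} u_i ln(q^u_i / q^z_i)`, with `0 ln 0 = 0`. -/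
def dilEntBreg {n K : ℕ} (T : TreeplexData n K) (α : Fin K → ℝ) (u z : Fin n → ℝ) : ℝ :=
  ∑ i, α (T.owner i) * u i * Real.log (T.q u i / T.q z i)

/-- Coordinates of a pair `z = (x, y)` indexed by `Fin M ⊕ Fin N`. -/
def coordsOf {M N : ℕ} (z : Pt M N) : Fin M ⊕ Fin N → ℝ := Sum.elim z.1 z.2

/-!
Each round of OOMD takes two mirror steps from the same centre `ẑ_t`, along `F(z_{t-1})` (giving
`z_t`) and along `F(z_t)` (giving `ẑ_{t+1}`). Adding the three-point inequalities of the two steps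
and using `⟨z_t - z*, F(z_t)⟩ ≥ 0` gives
`D(z*, ẑ_{t+1}) + ½‖ẑ_{t+1} - z_t‖² + ½‖z_t - ẑ_t‖²`
`  ≤ D(z*, ẑ_t) + η⟨ẑ_{t+1} - z_t, F(z_{t-1}) - F(z_t)⟩`.
The sign condition holds because `⟨w, F w⟩ = 0` and, by Sion's minimax theorem on the compact
convex treeplexes, a Nash equilibrium is a saddle point of `xᵀGy`. Strong convexity makes a
mirror step `η`-Lipschitz in its gradient, so the cross term is at most
`η² ‖F(z_{t-1} - z_t)‖² ≤ η² MN ‖z_{t-1} - z_t‖² ≤ (‖ẑ_t - z_{t-1}‖² + ‖z_t - ẑ_t‖²) / 128`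
when `η ≤ 1/(8P)`. Telescoping (the first error term vanishes since `ẑ₁ = z₀`) bounds the sums by
`(128/63) D(z*, ẑ₁) ≤ (32/15) D(z*, ẑ₁)`, so the squared increments are summable and tend to `0`.
-/

section Euclidean

variable {M N : ℕ}

lemma dotp_eq_dotProduct {n : ℕ} (a b : Fin n → ℝ) : dotp a b = a ⬝ᵥ b := rfl

lemma sqnorm_nonneg {n : ℕ} (a : Fin n → ℝ) : 0 ≤ sqnorm a :=
  Finset.sum_nonneg fun i _ => sq_nonneg (a i)

lemma sqnormPt_nonneg (a : Pt M N) : 0 ≤ sqnormPt a :=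
  add_nonneg (sqnorm_nonneg _) (sqnorm_nonneg _)

@[simp] lemma sqnormPt_zero : sqnormPt (0 : Pt M N) = 0 := by
  simp [sqnormPt, sqnorm]

lemma dotPt_add_left (a b c : Pt M N) : dotPt (a + b) c = dotPt a c + dotPt b c := by
  simp only [dotPt, dotp, Prod.fst_add, Prod.snd_add, Pi.add_apply, add_mul,
    Finset.sum_add_distrib]
  ring

lemma dotPt_smul_left (r : ℝ) (a c : Pt M N) : dotPt (r • a) c = r * dotPt a c := by
  simp only [dotPt, dotp, Prod.smul_fst, Prod.smul_snd, Pi.smul_apply, smul_eq_mul, mul_add,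
    Finset.mul_sum, mul_assoc]

lemma dotPt_sub_left (a b c : Pt M N) : dotPt (a - b) c = dotPt a c - dotPt b c := by
  simp only [dotPt, dotp, Prod.fst_sub, Prod.snd_sub, Pi.sub_apply, sub_mul,
    Finset.sum_sub_distrib]
  ring

lemma dotPt_sub_right (a b c : Pt M N) : dotPt a (b - c) = dotPt a b - dotPt a c := by
  simp only [dotPt, dotp, Prod.fst_sub, Prod.snd_sub, Pi.sub_apply, mul_sub,
    Finset.sum_sub_distrib]
  ring

lemma dotPt_smul_right (r : ℝ) (a c : Pt M N) : dotPt a (r • c) = r * dotPt a c := by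
  simp only [dotPt, dotp, Prod.smul_fst, Prod.smul_snd, Pi.smul_apply, smul_eq_mul, mul_add,
    Finset.mul_sum, mul_left_comm]

lemma sqnormPt_add (a b : Pt M N) :
    sqnormPt (a + b) = sqnormPt a + 2 * dotPt a b + sqnormPt b := by
  simp only [sqnormPt, sqnorm, dotPt, dotp, Prod.fst_add, Prod.snd_add, Pi.add_apply, add_sq,
    Finset.sum_add_distrib, mul_assoc, ← Finset.mul_sum]
  ring

lemma sqnormPt_sub (a b : Pt M N) :
    sqnormPt (a - b) = sqnormPt a - 2 * dotPt a b + sqnormPt b := by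
  simp only [sqnormPt, sqnorm, dotPt, dotp, Prod.fst_sub, Prod.snd_sub, Pi.sub_apply, sub_sq,
    Finset.sum_add_distrib, Finset.sum_sub_distrib, mul_assoc, ← Finset.mul_sum]
  ring

lemma sqnormPt_sub_comm (a b : Pt M N) : sqnormPt (a - b) = sqnormPt (b - a) := by
  simp only [sqnormPt, sqnorm, Prod.fst_sub, Prod.snd_sub, Pi.sub_apply, sub_sq_comm]

lemma sqnormPt_smul (r : ℝ) (a : Pt M N) : sqnormPt (r • a) = r ^ 2 * sqnormPt a := by
  simp only [sqnormPt, sqnorm, Prod.smul_fst, Prod.smul_snd, Pi.smul_apply, smul_eq_mul, mul_pow,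
    ← Finset.mul_sum, mul_add]

lemma two_mul_dotPt_le (a b : Pt M N) : 2 * dotPt a b ≤ sqnormPt a + sqnormPt b := by
  linarith [sqnormPt_sub a b, sqnormPt_nonneg (a - b)]

lemma sqnormPt_add_le (a b : Pt M N) : sqnormPt (a + b) ≤ 2 * sqnormPt a + 2 * sqnormPt b := by
  linarith [sqnormPt_add a b, two_mul_dotPt_le a b]

def dotPtCLM (g : Pt M N) : Pt M N →L[ℝ] ℝ :=
  LinearMap.toContinuousLinearMap
    { toFun := fun w => dotPt w g
      map_add' := fun a b => dotPt_add_left a b g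
      map_smul' := fun r a => dotPt_smul_left r a g }

@[simp] lemma dotPtCLM_apply (g w : Pt M N) : dotPtCLM g w = dotPt w g := rfl

end Euclidean

section GameOperator

variable {M N : ℕ} (G : Matrix (Fin M) (Fin N) ℝ)

lemma Fop_sub (a b : Pt M N) : Fop G a - Fop G b = Fop G (a - b) := by
  simp only [Fop, Prod.mk_sub_mk, Prod.fst_sub, Prod.snd_sub, Matrix.mulVec_sub, neg_sub_neg]
  rw [neg_sub]

lemma dotp_transpose_mulVec (x : Fin M → ℝ) (y : Fin N → ℝ) :
    dotp y (G.transpose.mulVec x) = dotp x (G.mulVec y) := by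
  rw [dotp_eq_dotProduct, dotp_eq_dotProduct, Matrix.dotProduct_mulVec, Matrix.vecMul_transpose,
    dotProduct_comm]

lemma dotPt_sub_Fop (w z : Pt M N) :
    dotPt (w - z) (Fop G w) = dotp w.1 (G.mulVec z.2) - dotp z.1 (G.mulVec w.2) := by
  have h := dotp_transpose_mulVec G w.1
  simp only [dotp_eq_dotProduct] at h ⊢
  simp only [dotPt, Fop, Prod.fst_sub, Prod.snd_sub, dotp_eq_dotProduct, sub_dotProduct,
    dotProduct_neg, h, Matrix.mulVec_sub, dotProduct_sub]
  ring

lemma sqnorm_mulVec_le {m k : ℕ} (A : Matrix (Fin m) (Fin k) ℝ) (hA : ∀ i j, |A i j| ≤ 1)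
    (v : Fin k → ℝ) : sqnorm (A.mulVec v) ≤ m * k * sqnorm v := by
  have hrow : ∀ i, (A.mulVec v i) ^ 2 ≤ k * sqnorm v := fun i => calc
    (A.mulVec v i) ^ 2 ≤ (∑ j, A i j ^ 2) * sqnorm v :=
      Finset.sum_mul_sq_le_sq_mul_sq Finset.univ (A i) v
    _ ≤ (∑ _j : Fin k, (1 : ℝ)) * sqnorm v :=
      mul_le_mul_of_nonneg_right (Finset.sum_le_sum fun j _ =>
        (sq_le_one_iff_abs_le_one _).2 (hA i j)) (sqnorm_nonneg v)
    _ = k * sqnorm v := by simp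
  calc sqnorm (A.mulVec v) ≤ ∑ _i : Fin m, k * sqnorm v := Finset.sum_le_sum fun i _ => hrow i
    _ = m * k * sqnorm v := by simp [mul_assoc]

lemma sqnormPt_Fop_le (hG : ∀ i j, |G i j| ≤ 1) (w : Pt M N) :
    sqnormPt (Fop G w) ≤ M * N * sqnormPt w := by
  have h1 := sqnorm_mulVec_le G hG w.2
  have h2 := sqnorm_mulVec_le G.transpose (fun i j => hG j i) w.1
  have hneg : sqnorm (-(G.transpose.mulVec w.1)) = sqnorm (G.transpose.mulVec w.1) := by
    simp [sqnorm]
  rw [sqnormPt, sqnormPt, Fop, hneg]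
  linarith

lemma sqnormPt_Fop_sub_le (hG : ∀ i j, |G i j| ≤ 1) (a b c : Pt M N) :
    sqnormPt (Fop G a - Fop G b) ≤ 2 * (M * N) * (sqnormPt (c - a) + sqnormPt (b - c)) := by
  have hsplit : a - b = (a - c) + (c - b) := by abel
  rw [Fop_sub, sqnormPt_sub_comm c a, sqnormPt_sub_comm b c]
  calc sqnormPt (Fop G (a - b)) ≤ M * N * sqnormPt (a - b) := sqnormPt_Fop_le G hG _
    _ ≤ M * N * (2 * sqnormPt (a - c) + 2 * sqnormPt (c - b)) := by
      rw [hsplit]; gcongr; exact sqnormPt_add_le _ _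
    _ = _ := by ring

end GameOperator

section Treeplex

lemma setOf_exists_eq_eq_image_prod {α β γ : Type*} (f : α → β → γ) (S : Set α) (T : Set β) :
    {z | ∃ u ∈ S, ∃ v ∈ T, z = f u v} = (fun p : α × β => f p.1 p.2) '' (S ×ˢ T) := by
  ext z
  simp [eq_comm]

lemma Fin.append_add_smul {m k : ℕ} (a b : ℝ) (u₁ u₂ : Fin m → ℝ) (v₁ v₂ : Fin k → ℝ) :
    a • Fin.append u₁ v₁ + b • Fin.append u₂ v₂ =
      Fin.append (a • u₁ + b • u₂) (a • v₁ + b • v₂) := by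
  ext j
  refine Fin.addCases (fun i => ?_) (fun i => ?_) j <;> simp

open scoped Pointwise in
lemma Convex.exists_add_smul_eq {E : Type*} [AddCommGroup E] [Module ℝ E] {T : Set E}
    (hT : Convex ℝ T) {v₁ v₂ : E} (hv₁ : v₁ ∈ T) (hv₂ : v₂ ∈ T) {p q : ℝ} (hp : 0 ≤ p)
    (hq : 0 ≤ q) : ∃ v ∈ T, (p + q) • v = p • v₁ + q • v₂ := by
  have h : p • v₁ + q • v₂ ∈ (p + q) • T := by
    rw [hT.add_smul hp hq]
    exact Set.add_mem_add (Set.smul_mem_smul_set hv₁) (Set.smul_mem_smul_set hv₂)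
  exact Set.mem_smul_set.1 h

namespace IsTreeplex

variable {n : ℕ} {S : Set (Fin n → ℝ)}

theorem nonneg (h : IsTreeplex S) : ∀ z ∈ S, ∀ i, 0 ≤ z i := by
  induction h with
  | simplex m => exact fun z hz => hz.1
  | prod _ _ ihS ihT =>
    rintro _ ⟨u, hu, v, hv, rfl⟩ j
    exact Fin.addCases (fun i => by simpa using ihS u hu i)
      (fun i => by simpa using ihT v hv i) j
  | branch i _ _ ihS ihT =>
    rintro _ ⟨u, hu, v, hv, rfl⟩ j
    exact Fin.addCases (fun l => by simpa using ihS u hu l)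
      (fun l => by simpa using mul_nonneg (ihS u hu i) (ihT v hv l)) j

theorem nonempty (h : IsTreeplex S) : S.Nonempty := by
  induction h with
  | simplex m => exact ⟨Pi.single 0 1, single_mem_stdSimplex ℝ 0⟩
  | prod _ _ ihS ihT =>
    rw [setOf_exists_eq_eq_image_prod]
    exact (ihS.prod ihT).image _
  | branch i _ _ ihS ihT =>
    rw [setOf_exists_eq_eq_image_prod]
    exact (ihS.prod ihT).image _

theorem isCompact (h : IsTreeplex S) : IsCompact S := by
  induction h with
  | simplex m => exact isCompact_stdSimplex ℝ _
  | prod _ _ ihS ihT =>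
    rw [setOf_exists_eq_eq_image_prod]
    exact (ihS.prod ihT).image (by fun_prop)
  | branch i _ _ ihS ihT =>
    rw [setOf_exists_eq_eq_image_prod]
    exact (ihS.prod ihT).image (by fun_prop)

theorem convex (h : IsTreeplex S) : Convex ℝ S := by
  induction h with
  | simplex m => exact convex_stdSimplex ℝ _
  | prod _ _ ihS ihT =>
    rintro _ ⟨u₁, hu₁, v₁, hv₁, rfl⟩ _ ⟨u₂, hu₂, v₂, hv₂, rfl⟩ a b ha hb hab
    exact ⟨_, ihS hu₁ hu₂ ha hb hab, _, ihT hv₁ hv₂ ha hb hab, Fin.append_add_smul ..⟩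
  | branch i hS _ ihS ihT =>
    rintro _ ⟨u₁, hu₁, v₁, hv₁, rfl⟩ _ ⟨u₂, hu₂, v₂, hv₂, rfl⟩ a b ha hb hab
    obtain ⟨v, hv, hv_eq⟩ := ihT.exists_add_smul_eq hv₁ hv₂
      (mul_nonneg ha (hS.nonneg u₁ hu₁ i)) (mul_nonneg hb (hS.nonneg u₂ hu₂ i))
    refine ⟨_, ihS hu₁ hu₂ ha hb hab, v, hv, ?_⟩
    rw [Fin.append_add_smul]
    congr 1
    funext j
    simpa [smul_eq_mul, mul_assoc] using (congrFun hv_eq j).symm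

end IsTreeplex

end Treeplex

section Nash

variable {M N : ℕ} (G : Matrix (Fin M) (Fin N) ℝ)
  {X : Set (Fin M → ℝ)} {Y : Set (Fin N → ℝ)}

lemma isLUB_maxPayoff (hYne : Y.Nonempty) (hYk : IsCompact Y) (x : Fin M → ℝ) :
    IsLUB ((fun y => dotp x (G.mulVec y)) '' Y) (maxPayoff G Y x) :=
  (hYk.image (by unfold dotp; fun_prop)).isLUB_sSup (hYne.image _)

lemma isGLB_minPayoff (hXne : X.Nonempty) (hXk : IsCompact X) (y : Fin N → ℝ) :
    IsGLB ((fun x => dotp x (G.mulVec y)) '' X) (minPayoff G X y) :=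
  (hXk.image (by unfold dotp; fun_prop)).isGLB_sInf (hXne.image _)

theorem isSaddlePointOn_of_mem_NashSet (hXne : X.Nonempty) (hXc : Convex ℝ X)
    (hXk : IsCompact X) (hYne : Y.Nonempty) (hYc : Convex ℝ Y) (hYk : IsCompact Y)
    {zs : Pt M N} (hzs : zs ∈ NashSet G X Y) :
    IsSaddlePointOn X Y (fun x y => dotp x (G.mulVec y)) zs.1 zs.2 := by
  obtain ⟨⟨hxX, hxmin⟩, ⟨hyY, hymax⟩⟩ := hzs
  have hlin_x : ∀ y : Fin N → ℝ, IsLinearMap ℝ fun x : Fin M → ℝ => dotp x (G.mulVec y) :=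
    fun y => ⟨fun a b => add_dotProduct a b _, fun c a => smul_dotProduct c a _⟩
  have hlin_y : ∀ x : Fin M → ℝ, IsLinearMap ℝ fun y : Fin N → ℝ => dotp x (G.mulVec y) :=
    fun x => ⟨fun a b => by simp [dotp_eq_dotProduct, Matrix.mulVec_add, dotProduct_add],
      fun c a => by simp [dotp_eq_dotProduct, Matrix.mulVec_smul, dotProduct_smul]⟩
  have hlsc : ∀ y : Fin N → ℝ, LowerSemicontinuousOn (fun x => dotp x (G.mulVec y)) X :=
    fun y => (Continuous.lowerSemicontinuous (by unfold dotp; fun_prop)).lowerSemicontinuousOn _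
  have husc : ∀ x : Fin M → ℝ, UpperSemicontinuousOn (fun y => dotp x (G.mulVec y)) Y :=
    fun x => (Continuous.upperSemicontinuous (by unfold dotp; fun_prop)).upperSemicontinuousOn _
  have hvalue : maxPayoff G Y zs.1 = minPayoff G X zs.2 :=
    Sion.minimax hXne hXk (fun y _ => hlsc y)
      (fun y _ r => hXc.inter (convex_halfSpace_le (hlin_x y) r)) hYc (fun x _ => husc x)
      (fun x _ r => hYc.inter (convex_halfSpace_ge (hlin_y x) r))
      hXc _ (fun x _ => isLUB_maxPayoff G hYne hYk x)
      _ (IsLeast.isGLB ⟨⟨zs.1, hxX, rfl⟩, by rintro _ ⟨x, hx, rfl⟩; exact hxmin x hx⟩)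
      _ (fun y _ => isGLB_minPayoff G hXne hXk y)
      _ (IsGreatest.isLUB ⟨⟨zs.2, hyY, rfl⟩, by rintro _ ⟨y, hy, rfl⟩; exact hymax y hy⟩)
  intro x hx y hy
  dsimp only
  calc dotp zs.1 (G.mulVec y) ≤ maxPayoff G Y zs.1 :=
        (isLUB_maxPayoff G hYne hYk _).1 ⟨y, hy, rfl⟩
    _ = minPayoff G X zs.2 := hvalue
    _ ≤ dotp x (G.mulVec zs.2) := (isGLB_minPayoff G hXne hXk _).1 ⟨x, hx, rfl⟩

lemma IsSaddlePointOn.dotPt_sub_Fop_nonneg {zs : Pt M N}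
    (h : IsSaddlePointOn X Y (fun x y => dotp x (G.mulVec y)) zs.1 zs.2) {w : Pt M N}
    (hw : w ∈ X ×ˢ Y) : 0 ≤ dotPt (w - zs) (Fop G w) := by
  rw [dotPt_sub_Fop]
  linarith [h w.1 hw.1 w.2 hw.2]

end Nash

lemma IsMinOn.hasFDerivAt_apply_sub_nonneg {E : Type*} [NormedAddCommGroup E] [NormedSpace ℝ E]
    {f : E → ℝ} {f' : E →L[ℝ] ℝ} {s : Set E} {a w : E} (h : IsMinOn f s a) (hs : Convex ℝ s)
    (ha : a ∈ s) (hw : w ∈ s) (hf : HasFDerivAt f f' a) : 0 ≤ f' (w - a) :=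
  h.localize.hasFDerivWithinAt_nonneg hf.hasFDerivWithinAt
    (sub_mem_posTangentConeAt_of_segment_subset (hs.segment_subset ha hw))

section Bregman

variable {M N : ℕ} {ψ : Pt M N → ℝ}

lemma Dbreg_three_point (ψ : Pt M N → ℝ) (w a b : Pt M N) :
    Dbreg ψ w a - Dbreg ψ w b - Dbreg ψ b a = fderiv ℝ ψ b (w - b) - fderiv ℝ ψ a (w - b) := by
  have h : fderiv ℝ ψ a (w - a) - fderiv ℝ ψ a (b - a) = fderiv ℝ ψ a (w - b) := by
    rw [← map_sub, sub_sub_sub_cancel_right]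
  rw [Dbreg, Dbreg, Dbreg, ← h]
  ring

lemma Dbreg_add_Dbreg (ψ : Pt M N → ℝ) (a b : Pt M N) :
    Dbreg ψ a b + Dbreg ψ b a = fderiv ℝ ψ a (a - b) - fderiv ℝ ψ b (a - b) := by
  have h : fderiv ℝ ψ a (b - a) = -fderiv ℝ ψ a (a - b) := by rw [← map_neg, neg_sub]
  rw [Dbreg, Dbreg, h]
  ring

lemma Dbreg_nonneg {Z : Set (Pt M N)}
    (hsc : ∀ u ∈ Z, ∀ v ∈ Z, (1 / 2) * sqnormPt (u - v) ≤ Dbreg ψ u v) {u v : Pt M N}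
    (hu : u ∈ Z) (hv : v ∈ Z) : 0 ≤ Dbreg ψ u v :=
  (mul_nonneg (by norm_num) (sqnormPt_nonneg _)).trans (hsc u hu v hv)

def proxObjective (ψ : Pt M N → ℝ) (η : ℝ) (c g w : Pt M N) : ℝ :=
  η * dotPt w g + Dbreg ψ w c

lemma hasFDerivAt_proxObjective {η : ℝ} {c g p : Pt M N} (hψ : DifferentiableAt ℝ ψ p) :
    HasFDerivAt (proxObjective ψ η c g) (η • dotPtCLM g + (fderiv ℝ ψ p - fderiv ℝ ψ c)) p := by
  have hlin : HasFDerivAt (fun w => fderiv ℝ ψ c (w - c)) (fderiv ℝ ψ c) p := by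
    simpa using ((fderiv ℝ ψ c).hasFDerivAt (x := p)).sub_const (fderiv ℝ ψ c c)
  exact ((dotPtCLM g).hasFDerivAt.const_mul η).add
    ((hψ.hasFDerivAt.sub_const (ψ c)).sub hlin)

end Bregman

section ProxStep

variable {M N : ℕ} {Z : Set (Pt M N)} {ψ : Pt M N → ℝ} {η : ℝ}

def IsProxStep (Z : Set (Pt M N)) (ψ : Pt M N → ℝ) (η : ℝ) (c g p : Pt M N) : Prop :=
  p ∈ Z ∧ IsMinOn (proxObjective ψ η c g) Z p

namespace IsProxStep

variable {c g p w : Pt M N}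

theorem variational_ineq (h : IsProxStep Z ψ η c g p) (hZ : Convex ℝ Z)
    (hψ : DifferentiableAt ℝ ψ p) (hw : w ∈ Z) :
    0 ≤ η * dotPt (w - p) g + fderiv ℝ ψ p (w - p) - fderiv ℝ ψ c (w - p) := by
  have := h.2.hasFDerivAt_apply_sub_nonneg hZ h.1 hw (hasFDerivAt_proxObjective hψ)
  simpa [add_sub_assoc] using this

theorem three_point (h : IsProxStep Z ψ η c g p) (hZ : Convex ℝ Z)
    (hψ : DifferentiableAt ℝ ψ p) (hw : w ∈ Z) :
    η * dotPt (p - w) g ≤ Dbreg ψ w c - Dbreg ψ w p - Dbreg ψ p c := by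
  have hvi := h.variational_ineq hZ hψ hw
  rw [dotPt_sub_left] at hvi
  rw [Dbreg_three_point, dotPt_sub_left]
  linarith

variable {g₁ g₂ p₁ p₂ u : Pt M N}

/-- By Cauchy–Schwarz this says `‖p₂ - p₁‖ ≤ η ‖g₁ - g₂‖`: for a 1-strongly convex `ψ` the step
is `η`-Lipschitz in the gradient. -/
theorem sqnormPt_sub_le (h₁ : IsProxStep Z ψ η c g₁ p₁) (h₂ : IsProxStep Z ψ η c g₂ p₂)
    (hZ : Convex ℝ Z) (hψ₁ : DifferentiableAt ℝ ψ p₁) (hψ₂ : DifferentiableAt ℝ ψ p₂)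
    (hsc : ∀ u ∈ Z, ∀ v ∈ Z, (1 / 2) * sqnormPt (u - v) ≤ Dbreg ψ u v) :
    sqnormPt (p₂ - p₁) ≤ η * dotPt (p₂ - p₁) (g₁ - g₂) := by
  have hv₁ := h₁.variational_ineq hZ hψ₁ h₂.1
  have hv₂ := h₂.variational_ineq hZ hψ₂ h₁.1
  rw [← neg_sub p₂ p₁, map_neg, map_neg, neg_sub] at hv₂
  have hmono := Dbreg_add_Dbreg ψ p₂ p₁
  have hsc₁ := hsc p₂ h₂.1 p₁ h₁.1
  have hsc₂ := hsc p₁ h₁.1 p₂ h₂.1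
  rw [sqnormPt_sub_comm] at hsc₂
  simp only [dotPt_sub_left, dotPt_sub_right] at hv₁ hv₂ ⊢
  linarith

theorem cross_term_le (h₁ : IsProxStep Z ψ η c g₁ p₁) (h₂ : IsProxStep Z ψ η c g₂ p₂)
    (hZ : Convex ℝ Z) (hψ₁ : DifferentiableAt ℝ ψ p₁) (hψ₂ : DifferentiableAt ℝ ψ p₂)
    (hsc : ∀ u ∈ Z, ∀ v ∈ Z, (1 / 2) * sqnormPt (u - v) ≤ Dbreg ψ u v) :
    η * dotPt (p₂ - p₁) (g₁ - g₂) ≤ η ^ 2 * sqnormPt (g₁ - g₂) := by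
  have hcontr := h₁.sqnormPt_sub_le h₂ hZ hψ₁ hψ₂ hsc
  have hyoung := two_mul_dotPt_le (p₂ - p₁) (η • (g₁ - g₂))
  rw [dotPt_smul_right, sqnormPt_smul] at hyoung
  linarith

theorem optimistic_step (h₁ : IsProxStep Z ψ η c g₁ p₁) (h₂ : IsProxStep Z ψ η c g₂ p₂)
    (hZ : Convex ℝ Z) (hψ₁ : DifferentiableAt ℝ ψ p₁) (hψ₂ : DifferentiableAt ℝ ψ p₂)
    (hu : u ∈ Z) :
    Dbreg ψ u p₂ + Dbreg ψ p₂ p₁ + Dbreg ψ p₁ c ≤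
      Dbreg ψ u c + η * dotPt (p₂ - p₁) (g₁ - g₂) - η * dotPt (p₁ - u) g₂ := by
  have h₁₂ := h₁.three_point hZ hψ₁ h₂.1
  have h₂u := h₂.three_point hZ hψ₂ hu
  simp only [dotPt_sub_left, dotPt_sub_right] at h₁₂ h₂u ⊢
  linarith

end IsProxStep

end ProxStep

section Sequences

lemma sum_range_succ_eq_sum_Icc (f : ℕ → ℝ) (n : ℕ) :
    ∑ t ∈ Finset.range n, f (t + 1) = ∑ t ∈ Finset.Icc 1 n, f t := by
  rw [Finset.range_eq_Ico, Finset.sum_Ico_add' f 0 n 1, zero_add, Finset.Ico_add_one_right_eq_Icc]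

lemma mul_sum_Icc_le_of_step {D a b : ℕ → ℝ} {c : ℝ} (hc : 0 ≤ c) (hD : ∀ t, 0 ≤ D (t + 1))
    (ha : ∀ t, 0 ≤ a t) (ha₀ : a 0 = 0)
    (hstep : ∀ t, D (t + 2) + (1 / 2) * (a (t + 1) + b (t + 1)) ≤
      D (t + 1) + c * (a t + b (t + 1))) (n : ℕ) :
    (1 / 2 - c) * ∑ t ∈ Finset.Icc 1 n, (a t + b t) ≤ D 1 := by
  suffices h : D (n + 1) + (1 / 2 - c) * ∑ t ∈ Finset.Icc 1 n, (a t + b t) + c * a n ≤ D 1 by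
    linarith [hD n, mul_nonneg hc (ha n)]
  induction n with
  | zero => simp [ha₀]
  | succ n ih =>
    rw [Finset.sum_Icc_succ_top (by omega)]
    linarith [hstep n]

lemma tendsto_atTop_zero_of_sum_Icc_le {f : ℕ → ℝ} {C : ℝ} (hf : ∀ t, 0 ≤ f t)
    (h : ∀ n, ∑ t ∈ Finset.Icc 1 n, f t ≤ C) : Tendsto f atTop (𝓝 0) := by
  have hsum : Summable fun t => f (t + 1) :=
    summable_of_sum_range_le (fun t => hf (t + 1)) fun n => by
      rw [sum_range_succ_eq_sum_Icc]; exact h n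
  exact (tendsto_add_atTop_iff_nat 1).mp hsum.tendsto_atTop_zero

lemma tendsto_norm2Pt_of_sqnormPt_le {M N : ℕ} {u : ℕ → Pt M N} {f : ℕ → ℝ}
    (hu : ∀ t, sqnormPt (u t) ≤ f t) (hf : Tendsto f atTop (𝓝 0)) :
    Tendsto (fun t => norm2Pt (u t)) atTop (𝓝 0) := by
  simpa [norm2Pt] using (squeeze_zero (fun t => sqnormPt_nonneg (u t)) hu hf).sqrt

lemma tendsto_increments_of_sum_Icc_le {M N : ℕ} {z zh : ℕ → Pt M N} {C : ℝ}
    (h : ∀ n, ∑ t ∈ Finset.Icc 1 n, (sqnormPt (zh (t + 1) - z t) + sqnormPt (z t - zh t)) ≤ C) :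
    Tendsto (fun t => norm2Pt (z t - zh t)) atTop (𝓝 0) ∧
    Tendsto (fun t => norm2Pt (z (t + 1) - z t)) atTop (𝓝 0) ∧
    Tendsto (fun t => norm2Pt (zh (t + 1) - zh t)) atTop (𝓝 0) := by
  have hab := tendsto_atTop_zero_of_sum_Icc_le
    (fun t => add_nonneg (sqnormPt_nonneg _) (sqnormPt_nonneg _)) h
  have ha : Tendsto (fun t => sqnormPt (zh (t + 1) - z t)) atTop (𝓝 0) :=
    squeeze_zero (fun t => sqnormPt_nonneg _)
      (fun t => le_add_of_nonneg_right (sqnormPt_nonneg _)) hab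
  have hb : Tendsto (fun t => sqnormPt (z t - zh t)) atTop (𝓝 0) :=
    squeeze_zero (fun t => sqnormPt_nonneg _)
      (fun t => le_add_of_nonneg_left (sqnormPt_nonneg _)) hab
  refine ⟨tendsto_norm2Pt_of_sqnormPt_le (fun t => le_rfl) hb, ?_, ?_⟩
  · refine tendsto_norm2Pt_of_sqnormPt_le (fun t => ?_)
      (by simpa using (((tendsto_add_atTop_iff_nat 1).mpr hb).const_mul 2).add (ha.const_mul 2))
    simpa using sqnormPt_add_le (z (t + 1) - zh (t + 1)) (zh (t + 1) - z t)
  · refine tendsto_norm2Pt_of_sqnormPt_le (fun t => ?_)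
      (by simpa using (ha.const_mul 2).add (hb.const_mul 2))
    simpa using sqnormPt_add_le (zh (t + 1) - z t) (z t - zh t)

end Sequences

lemma sq_mul_mul_le_of_le_one_div {η m n : ℝ} (hη : 0 < η) (hm : 0 ≤ m) (hn : 0 ≤ n)
    (hηP : η ≤ 1 / (8 * (m + n))) : η ^ 2 * (m * n) ≤ 1 / 256 := by
  have hsum : η * m + η * n ≤ 1 / 8 := by
    rcases (add_nonneg hm hn).eq_or_lt with h | h
    · rw [← h] at hηP; norm_num at hηP; linarith
    · rw [le_div_iff₀ (by positivity)] at hηP; linarith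
  nlinarith [sq_nonneg (η * m - η * n), mul_nonneg hη.le hm, mul_nonneg hη.le hn]

namespace IsOOMD

variable {M N : ℕ} {G : Matrix (Fin M) (Fin N) ℝ} {Z : Set (Pt M N)} {ψ : Pt M N → ℝ} {η : ℝ}
  {z zh : ℕ → Pt M N}

theorem mem_z (h : IsOOMD G Z (Dbreg ψ) η z zh) (t : ℕ) : z t ∈ Z := by
  cases t with
  | zero => exact h.1
  | succ t => exact (h.2.2.1 (t + 1) (by omega)).1

theorem mem_zh (h : IsOOMD G Z (Dbreg ψ) η z zh) (t : ℕ) : zh (t + 1) ∈ Z := by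
  cases t with
  | zero => exact h.2.1 ▸ h.1
  | succ t => exact (h.2.2.2 (t + 1) (by omega)).1

theorem isProxStep_z (h : IsOOMD G Z (Dbreg ψ) η z zh) (t : ℕ) :
    IsProxStep Z ψ η (zh (t + 1)) (Fop G (z t)) (z (t + 1)) :=
  ⟨h.mem_z (t + 1), isMinOn_iff.2 (h.2.2.1 (t + 1) (by omega)).2⟩

theorem isProxStep_zh (h : IsOOMD G Z (Dbreg ψ) η z zh) (t : ℕ) :
    IsProxStep Z ψ η (zh (t + 1)) (Fop G (z (t + 1))) (zh (t + 2)) :=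
  ⟨h.mem_zh (t + 1), isMinOn_iff.2 (h.2.2.2 (t + 1) (by omega)).2⟩

theorem energy_step (h : IsOOMD G Z (Dbreg ψ) η z zh) (hG : ∀ i j, |G i j| ≤ 1)
    (hZ : Convex ℝ Z) (hdiff : ∀ v ∈ Z, DifferentiableAt ℝ ψ v)
    (hsc : ∀ u ∈ Z, ∀ v ∈ Z, (1 / 2) * sqnormPt (u - v) ≤ Dbreg ψ u v)
    (hη : 0 ≤ η) (hηMN : η ^ 2 * (M * N) ≤ 1 / 256) {zs : Pt M N} (hzs : zs ∈ Z)
    (hnash : ∀ w ∈ Z, 0 ≤ dotPt (w - zs) (Fop G w)) (t : ℕ) :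
    Dbreg ψ zs (zh (t + 2)) +
        (1 / 2) * (sqnormPt (zh (t + 2) - z (t + 1)) + sqnormPt (z (t + 1) - zh (t + 1))) ≤
      Dbreg ψ zs (zh (t + 1)) +
        (1 / 128) * (sqnormPt (zh (t + 1) - z t) + sqnormPt (z (t + 1) - zh (t + 1))) := by
  have h₁ := h.isProxStep_z t
  have h₂ := h.isProxStep_zh t
  have hψ₁ := hdiff _ h₁.1
  have hψ₂ := hdiff _ h₂.1
  have hstep := h₁.optimistic_step h₂ hZ hψ₁ hψ₂ hzs
  have hcross := h₁.cross_term_le h₂ hZ hψ₁ hψ₂ hsc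
  have hgain := mul_nonneg hη (hnash _ h₁.1)
  have hsc₂₁ := hsc _ h₂.1 _ h₁.1
  have hsc₁c := hsc _ h₁.1 _ (h.mem_zh t)
  have hlip := sqnormPt_Fop_sub_le G hG (z t) (z (t + 1)) (zh (t + 1))
  have hcross' : η ^ 2 * sqnormPt (Fop G (z t) - Fop G (z (t + 1))) ≤
      (1 / 128) * (sqnormPt (zh (t + 1) - z t) + sqnormPt (z (t + 1) - zh (t + 1))) := by
    have hnn := add_nonneg (sqnormPt_nonneg (zh (t + 1) - z t))
      (sqnormPt_nonneg (z (t + 1) - zh (t + 1)))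
    nlinarith [mul_le_mul_of_nonneg_left hlip (sq_nonneg η), mul_le_mul_of_nonneg_right hηMN hnn]
  linarith

theorem sum_Icc_le (h : IsOOMD G Z (Dbreg ψ) η z zh) (hG : ∀ i j, |G i j| ≤ 1)
    (hZ : Convex ℝ Z) (hdiff : ∀ v ∈ Z, DifferentiableAt ℝ ψ v)
    (hsc : ∀ u ∈ Z, ∀ v ∈ Z, (1 / 2) * sqnormPt (u - v) ≤ Dbreg ψ u v)
    (hη : 0 ≤ η) (hηMN : η ^ 2 * (M * N) ≤ 1 / 256) {zs : Pt M N} (hzs : zs ∈ Z)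
    (hnash : ∀ w ∈ Z, 0 ≤ dotPt (w - zs) (Fop G w)) (n : ℕ) :
    ∑ t ∈ Finset.Icc 1 n, (sqnormPt (zh (t + 1) - z t) + sqnormPt (z t - zh t)) ≤
      128 / 63 * Dbreg ψ zs (zh 1) := by
  have := mul_sum_Icc_le_of_step (D := fun t => Dbreg ψ zs (zh t))
    (a := fun t => sqnormPt (zh (t + 1) - z t)) (b := fun t => sqnormPt (z t - zh t))
    (by norm_num) (fun t => Dbreg_nonneg hsc hzs (h.mem_zh t)) (fun t => sqnormPt_nonneg _)
    (by simp [h.2.1]) (h.energy_step hG hZ hdiff hsc hη hηMN hzs hnash) n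
  linarith

end IsOOMD

/-- summability of OOMD increments: for OOMD with a differentiable,
1-strongly-convex regularizer and `η ≤ 1/(8P)`, and any Nash equilibrium `z*`, the
sums `∑_{t=1}^{T-1} (‖ẑ_{t+1} − z_t‖₂² + ‖z_t − ẑ_t‖₂²)` are bounded by
`(32/15) D_ψ(z*, ẑ₁)`, and consequently the successive increments tend to `0`. -/
theorem oomd_summable_increments {M N : ℕ}
    (G : Matrix (Fin M) (Fin N) ℝ) (hG : ∀ i j, |G i j| ≤ 1)
    (X : Set (Fin M → ℝ)) (Y : Set (Fin N → ℝ))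
    (hX : IsTreeplex X) (hY : IsTreeplex Y)
    (ψ : Pt M N → ℝ)
    (hdiff : ∀ v ∈ X ×ˢ Y, DifferentiableAt ℝ ψ v)
    (hsc : ∀ u ∈ X ×ˢ Y, ∀ v ∈ X ×ˢ Y, (1 / 2) * sqnormPt (u - v) ≤ Dbreg ψ u v)
    (η : ℝ) (hη : 0 < η) (hηP : η ≤ 1 / (8 * ((M : ℝ) + N)))
    (z zh : ℕ → Pt M N) (hoomd : IsOOMD G (X ×ˢ Y) (Dbreg ψ) η z zh)
    (zs : Pt M N) (hzs : zs ∈ NashSet G X Y) :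
    (∀ T : ℕ, 2 ≤ T →
      (∑ t ∈ Finset.Icc 1 (T - 1),
        (sqnormPt (zh (t + 1) - z t) + sqnormPt (z t - zh t))) ≤
          (32 / 15) * Dbreg ψ zs (zh 1)) ∧
    Tendsto (fun t : ℕ => norm2Pt (z t - zh t)) atTop (𝓝 0) ∧
    Tendsto (fun t : ℕ => norm2Pt (z (t + 1) - z t)) atTop (𝓝 0) ∧
    Tendsto (fun t : ℕ => norm2Pt (zh (t + 1) - zh t)) atTop (𝓝 0) := by
  have hzsZ : zs ∈ X ×ˢ Y := ⟨hzs.1.1, hzs.2.1⟩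
  have hsaddle := isSaddlePointOn_of_mem_NashSet G hX.nonempty hX.convex hX.isCompact
    hY.nonempty hY.convex hY.isCompact hzs
  have hsum := hoomd.sum_Icc_le hG (hX.convex.prod hY.convex) hdiff hsc hη.le
    (sq_mul_mul_le_of_le_one_div hη (Nat.cast_nonneg M) (Nat.cast_nonneg N) hηP) hzsZ
    (fun w hw => hsaddle.dotPt_sub_Fop_nonneg G hw)
  have hD₁ : 0 ≤ Dbreg ψ zs (zh 1) := Dbreg_nonneg hsc hzsZ (hoomd.mem_zh 0)
  exact ⟨fun T _ => (hsum (T - 1)).trans (by linarith), tendsto_increments_of_sum_Icc_le hsum⟩
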